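/- Any subset classifier has exactly two elements: if (Ω, t) is a set with t ∈ Ω such that every injection into any set is the inverse image of t under a unique characteristic function, then Ω is in bijection with Bool. -/

import Mathlib

/-!
Classify the empty subset of a one-point set: its characteristic map picks an element `f` of `Ω`.
A map into `Ω` classifies an empty subset exactly when it never takes the value `t`, so `f ≠ t`,
and for any `ω ≠ t` the constant map `ω` classifies the empty subset as well; uniqueness of the
characteristic map forces `ω = f`. Hence `t` and `f` are the only elements of `Ω`.
-/

universe u v w x

def IsCharacteristicMap {Ω : Type u} {A : Type v} {X : Type w} (t : Ω) (j : A → X) (χ : X → Ω) :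
    Prop :=
  (∀ a, χ (j a) = t) ∧
    ∀ (I : Type x) (q : I → X), (∀ s, χ (q s) = t) → ∃! qbar : I → A, q = j ∘ qbar

theorem isCharacteristicMap_iff_forall_ne_of_isEmpty {Ω : Type u} {A : Type v} {X : Type w}
    [IsEmpty A] (t : Ω) (j : A → X) (χ : X → Ω) :
    IsCharacteristicMap.{u, v, w, x} t j χ ↔ ∀ y, χ y ≠ t := by
  constructor
  · rintro ⟨-, hfactor⟩ y hy
    obtain ⟨qbar, -, -⟩ := hfactor PUnit (fun _ => y) fun _ => hy
    exact isEmptyElim (qbar PUnit.unit)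
  · intro hne
    refine ⟨isEmptyElim, fun I q hq => ?_⟩
    have : IsEmpty I := ⟨fun s => hne (q s) (hq s)⟩
    exact ⟨isEmptyElim, funext isEmptyElim, fun _ _ => funext isEmptyElim⟩

theorem nonempty_equiv_bool_of_existsUnique_ne {α : Type u} (t : α) (h : ∃! y, y ≠ t) :
    Nonempty (α ≃ Bool) := by
  have hcard : Nat.card α = 2 := (Nat.card_eq_two_iff' t).2 h
  have : Finite α := Nat.finite_of_card_ne_zero (by omega)
  exact Finite.card_eq.1 (by simp [hcard])

theorem subset_classifier_two_elements (Ω : Type u) (t : Ω)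
    (h : ∀ (A X : Type u) (j : A → X), Function.Injective j →
      ∃! χ : X → Ω,
        (∀ a, χ (j a) = t) ∧
        (∀ (I : Type u) (q : I → X), (∀ s, χ (q s) = t) →
          ∃! qbar : I → A, q = j ∘ qbar)) :
    Nonempty (Ω ≃ Bool) := by
  obtain ⟨χ₀, hχ₀, huniq⟩ :=
    h PEmpty PUnit PEmpty.elim (Function.injective_of_subsingleton _)
  have hclassifies (χ : PUnit → Ω) :
      IsCharacteristicMap.{u, u, u, u} t PEmpty.elim χ ↔ ∀ y, χ y ≠ t :=
    isCharacteristicMap_iff_forall_ne_of_isEmpty t PEmpty.elim χ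
  refine nonempty_equiv_bool_of_existsUnique_ne t ⟨χ₀ PUnit.unit, (hclassifies χ₀).1 hχ₀ _, ?_⟩
  intro ω hω
  exact congrFun (huniq (fun _ => ω) ((hclassifies _).2 fun _ => hω)) PUnit.unit
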